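/- arXiv:1908.06348 — 3 statements merged into one kernel-verified Lean document; each statement's English description precedes it below -/
import Mathlib

section
/- With h and h_{T,M} as above (h ∈ 𝓗⁺(S,N), M = T^μ, 0 < μ < 1), one has ∫_{−∞}^{∞} h_{T,M}(t) log(1/4 + t²) t² dt ∼ 2MT² log(T²) · ∫_{−∞}^{∞} h(t) dt as T → ∞. -/
open Real MeasureTheory Filter Topology

/-!
Substituting `t = T + T^μ s` in each translate (both give the same integral, since `h` and the
weight `log (1/4 + t²) t²` are even) turns the numerator into
`2 T^μ ∫ h(s) log (1/4 + (T + T^μ s)²) (T + T^μ s)² ds`. As `T^μ = o(T)`, the weight divided by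
`T² log T²` tends to `1` pointwise, and for `T ≥ 3` it is at most `2 (1 + |s|)³ ≤ 2 e^{3|s|}`,
which the decay `e^{-π|s|}` of `h` absorbs because `π > 3`. Dominated convergence concludes.
-/

lemma integrable_exp_neg_mul_abs {c : ℝ} (hc : 0 < c) :
    Integrable fun s : ℝ => exp (-(c * |s|)) := by
  refine LocallyIntegrable.integrable_of_isBigO_atTop_of_norm_isNegInvariant
    (g := fun x : ℝ => exp (-c * x)) ?_ ?_ ?_
    ⟨Set.Ioi 0, Ioi_mem_atTop 0, exp_neg_integrableOn_Ioi 0 hc⟩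
  · exact (continuous_exp.comp (continuous_const.mul continuous_abs).neg).locallyIntegrable
  · filter_upwards with x
    simp [abs_neg]
  · refine Asymptotics.IsBigO.of_bound 1 ?_
    filter_upwards [eventually_ge_atTop (0 : ℝ)] with x hx
    simp [abs_of_nonneg hx, Real.abs_exp, neg_mul]

lemma integral_comp_sub_div_eq_smul {E : Type*} [NormedAddCommGroup E] [NormedSpace ℝ E]
    (g : ℝ → E) {M : ℝ} (hM : 0 < M) (T : ℝ) :
    ∫ t, g ((t - T) / M) = M • ∫ s, g s := by
  rw [integral_sub_right_eq_self (fun t => g (t / M)) T, Measure.integral_comp_div, abs_of_pos hM]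

theorem integral_even_add_translates_mul {h F : ℝ → ℝ} (hh : ∀ t, h (-t) = h t)
    (hF : ∀ t, F (-t) = F t) {M : ℝ} (hM : 0 < M) (T : ℝ)
    (hint : Integrable fun s => h s * F (T + M * s)) :
    ∫ t, (h ((t - T) / M) + h ((t + T) / M)) * F t = 2 * M * ∫ s, h s * F (T + M * s) := by
  set g : ℝ → ℝ := fun s => h s * F (T + M * s)
  have hsub : ∀ t, T + M * ((t - T) / M) = t := fun t => by
    rw [mul_div_cancel₀ _ hM.ne']; ring
  have hminus : ∀ t, g ((t - T) / M) = h ((t - T) / M) * F t := fun t => by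
    simp only [g, hsub]
  have hplus : ∀ t, g ((-t - T) / M) = h ((t + T) / M) * F t := fun t => by
    simp only [g, hsub, hF]
    rw [show (-t - T) / M = -((t + T) / M) by ring, hh]
  have hint' : Integrable fun t => g ((t - T) / M) := (hint.comp_div hM.ne').comp_sub_right T
  calc ∫ t, (h ((t - T) / M) + h ((t + T) / M)) * F t
      = ∫ t, (g ((t - T) / M) + g ((-t - T) / M)) := by
        congr 1; ext t; rw [hminus, hplus]; ring
    _ = 2 * ∫ t, g ((t - T) / M) := by
        rw [integral_add hint' hint'.comp_neg, integral_neg_eq_self (fun t => g ((t - T) / M)),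
          two_mul]
    _ = 2 * M * ∫ s, g s := by
        rw [integral_comp_sub_div_eq_smul g hM, smul_eq_mul, mul_assoc]

noncomputable def logWeight (t : ℝ) : ℝ := log (1 / 4 + t ^ 2) * t ^ 2

lemma logWeight_neg (t : ℝ) : logWeight (-t) = logWeight t := by
  simp [logWeight]

lemma continuous_logWeight : Continuous logWeight :=
  ((continuous_const.add (continuous_pow 2)).log fun t =>
    (by positivity : (0 : ℝ) < 1 / 4 + t ^ 2).ne').mul (continuous_pow 2)

lemma tendsto_add_rpow_mul_div_self {μ : ℝ} (hμ : μ < 1) (s : ℝ) :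
    Tendsto (fun T : ℝ => (T + T ^ μ * s) / T) atTop (𝓝 1) := by
  have hpow : Tendsto (fun T : ℝ => T ^ (μ - 1)) atTop (𝓝 0) := by
    simpa using tendsto_rpow_neg_atTop (y := 1 - μ) (by linarith)
  have hlim : Tendsto (fun T : ℝ => 1 + T ^ (μ - 1) * s) atTop (𝓝 1) := by
    simpa using (hpow.mul_const s).const_add 1
  refine hlim.congr' ?_
  filter_upwards [eventually_gt_atTop 0] with T hT
  rw [rpow_sub hT, rpow_one]
  field_simp

lemma tendsto_log_quarter_add_sq_div_log_sq {X : ℝ → ℝ}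
    (hX : Tendsto (fun T => X T / T) atTop (𝓝 1)) :
    Tendsto (fun T => log (1 / 4 + X T ^ 2) / log (T ^ 2)) atTop (𝓝 1) := by
  have hinner : Tendsto (fun T : ℝ => 1 / (4 * T ^ 2) + (X T / T) ^ 2) atTop (𝓝 1) := by
    have hinv : Tendsto (fun T : ℝ => 1 / (4 * T ^ 2)) atTop (𝓝 0) :=
      tendsto_const_nhds.div_atTop ((tendsto_pow_atTop two_ne_zero).const_mul_atTop four_pos)
    simpa using hinv.add (hX.pow 2)
  have hlog : Tendsto (fun T : ℝ => log (1 / (4 * T ^ 2) + (X T / T) ^ 2)) atTop (𝓝 0) := by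
    simpa [Function.comp_def] using (continuousAt_log one_ne_zero).tendsto.comp hinner
  have hlogT : Tendsto (fun T : ℝ => log (T ^ 2)) atTop atTop :=
    tendsto_log_atTop.comp (tendsto_pow_atTop two_ne_zero)
  have hlim := (hlog.div_atTop hlogT).const_add 1
  rw [add_zero] at hlim
  refine hlim.congr' ?_
  filter_upwards [eventually_gt_atTop 1] with T hT
  have hsplit : log (1 / 4 + X T ^ 2)
      = log (T ^ 2) + log (1 / (4 * T ^ 2) + (X T / T) ^ 2) := by
    rw [← log_mul (by positivity) (by positivity)]
    congr 1
    field_simp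
  have hlogT_pos : 0 < log (T ^ 2) := log_pos (by nlinarith)
  rw [hsplit]
  field_simp

lemma tendsto_logWeight_div {X : ℝ → ℝ} (hX : Tendsto (fun T => X T / T) atTop (𝓝 1)) :
    Tendsto (fun T => logWeight (X T) / (T ^ 2 * log (T ^ 2))) atTop (𝓝 1) := by
  have hlim := (tendsto_log_quarter_add_sq_div_log_sq hX).mul (hX.pow 2)
  rw [one_pow, one_mul] at hlim
  refine hlim.congr' ?_
  filter_upwards with T
  simp only [logWeight]
  ring

lemma abs_logWeight_le {x T R : ℝ} (hT : 3 ≤ T) (hR : 1 ≤ R) (hx : |x| ≤ T * R) :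
    |logWeight x| ≤ 2 * (T ^ 2 * log (T ^ 2)) * R ^ 3 := by
  have hlogT : 1 ≤ log T := by
    rw [le_log_iff_exp_le (by linarith)]
    linarith [exp_one_lt_d9]
  have hlogR : log R ≤ R - 1 := log_le_sub_one_of_pos (by linarith)
  have hsq : x ^ 2 ≤ T ^ 2 * R ^ 2 := by
    rw [← mul_pow, ← sq_abs]
    exact pow_le_pow_left₀ (abs_nonneg x) hx 2
  have hupper : log (1 / 4 + x ^ 2) ≤ 3 * log T + 2 * log R := by
    have hTR : 9 ≤ T ^ 2 * R ^ 2 := by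
      have h3 : 3 ≤ T * R := by nlinarith
      rw [← mul_pow]; nlinarith
    have hle : 1 / 4 + x ^ 2 ≤ T ^ 3 * R ^ 2 := by
      nlinarith [mul_le_mul_of_nonneg_right hT (by positivity : (0 : ℝ) ≤ T ^ 2 * R ^ 2)]
    calc log (1 / 4 + x ^ 2) ≤ log (T ^ 3 * R ^ 2) := log_le_log (by positivity) hle
      _ = 3 * log T + 2 * log R := by
        rw [log_mul (by positivity) (by positivity), log_pow, log_pow]; push_cast; ring
  have hlower : -3 ≤ log (1 / 4 + x ^ 2) := by
    have h4 : log 4 ≤ 3 := by linarith [log_le_sub_one_of_pos (by norm_num : (0 : ℝ) < 4)]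
    calc -3 ≤ -log 4 := by linarith
      _ = log (1 / 4) := by rw [one_div, log_inv]
      _ ≤ log (1 / 4 + x ^ 2) := log_le_log (by norm_num) (by nlinarith)
  have habs_log : |log (1 / 4 + x ^ 2)| ≤ 2 * log (T ^ 2) * R := by
    rw [log_pow, abs_le]
    push_cast
    constructor <;> nlinarith
  have hlogT2 : 0 ≤ log (T ^ 2) := log_nonneg (by nlinarith)
  rw [logWeight, abs_mul, abs_of_nonneg (sq_nonneg x)]
  calc |log (1 / 4 + x ^ 2)| * x ^ 2 ≤ (2 * log (T ^ 2) * R) * (T ^ 2 * R ^ 2) :=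
        mul_le_mul habs_log hsq (sq_nonneg x) (by positivity)
    _ = 2 * (T ^ 2 * log (T ^ 2)) * R ^ 3 := by ring

section Domination

variable {h : ℝ → ℝ} {C c : ℝ}

lemma norm_mul_logWeight_le (hb : ∀ t, |h t| ≤ C * exp (-(c * |t|))) {T M : ℝ} (hT : 3 ≤ T)
    (hM : 0 ≤ M) (hMT : M ≤ T) (s : ℝ) :
    ‖h s * logWeight (T + M * s)‖ ≤ T ^ 2 * log (T ^ 2) * (2 * C * exp (-((c - 3) * |s|))) := by
  have hx : |T + M * s| ≤ T * (1 + |s|) :=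
    calc |T + M * s| ≤ |T| + |M * s| := abs_add_le _ _
      _ = T + M * |s| := by rw [abs_of_nonneg (by linarith), abs_mul, abs_of_nonneg hM]
      _ ≤ T * (1 + |s|) := by nlinarith [abs_nonneg s]
  have hw := abs_logWeight_le hT (by linarith [abs_nonneg s]) hx
  have hcube : (1 + |s|) ^ 3 ≤ exp (3 * |s|) :=
    calc (1 + |s|) ^ 3 ≤ exp |s| ^ 3 :=
          pow_le_pow_left₀ (by positivity) (by linarith [add_one_le_exp |s|]) 3
      _ = exp (3 * |s|) := by rw [← exp_nat_mul]; norm_num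
  have hCexp : 0 ≤ C * exp (-(c * |s|)) := (abs_nonneg _).trans (hb s)
  have hlog : 0 ≤ log (T ^ 2) := log_nonneg (by nlinarith)
  rw [Real.norm_eq_abs, abs_mul]
  calc |h s| * |logWeight (T + M * s)|
      ≤ C * exp (-(c * |s|)) * (2 * (T ^ 2 * log (T ^ 2)) * (1 + |s|) ^ 3) :=
        mul_le_mul (hb s) hw (abs_nonneg _) hCexp
    _ ≤ C * exp (-(c * |s|)) * (2 * (T ^ 2 * log (T ^ 2)) * exp (3 * |s|)) := by gcongr
    _ = T ^ 2 * log (T ^ 2) * (2 * C * exp (-((c - 3) * |s|))) := by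
        rw [show -((c - 3) * |s|) = -(c * |s|) + 3 * |s| by ring, exp_add]; ring

variable (hc : 3 < c) (hm : AEStronglyMeasurable h) (hb : ∀ t, |h t| ≤ C * exp (-(c * |t|)))
include hc hm hb

lemma integrable_mul_logWeight {T M : ℝ} (hT : 3 ≤ T) (hM : 0 ≤ M) (hMT : M ≤ T) :
    Integrable fun s => h s * logWeight (T + M * s) :=
  (((integrable_exp_neg_mul_abs (sub_pos.2 hc)).const_mul (2 * C)).const_mul
    (T ^ 2 * log (T ^ 2))).mono'
    (hm.mul (continuous_logWeight.comp
      (continuous_const.add (continuous_const.mul continuous_id))).aestronglyMeasurable)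
    (ae_of_all _ (norm_mul_logWeight_le hb hT hM hMT))

theorem tendsto_integral_mul_logWeight_div {μ : ℝ} (hμ : μ < 1) :
    Tendsto (fun T : ℝ => ∫ s, h s * logWeight (T + T ^ μ * s) / (T ^ 2 * log (T ^ 2))) atTop
      (𝓝 (∫ s, h s)) := by
  have hM : ∀ T : ℝ, 3 ≤ T → 0 ≤ T ^ μ ∧ T ^ μ ≤ T := fun T hT =>
    ⟨rpow_nonneg (by linarith) μ, rpow_le_self_of_one_le (by linarith) hμ.le⟩
  refine tendsto_integral_filter_of_dominated_convergence
    (fun s => 2 * C * exp (-((c - 3) * |s|))) ?_ ?_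
    ((integrable_exp_neg_mul_abs (sub_pos.2 hc)).const_mul _) ?_
  · filter_upwards [eventually_ge_atTop 3] with T hT
    exact ((integrable_mul_logWeight hc hm hb hT (hM T hT).1 (hM T hT).2).div_const
      _).aestronglyMeasurable
  · filter_upwards [eventually_ge_atTop 3] with T hT
    have hD : 0 < T ^ 2 * log (T ^ 2) := mul_pos (by positivity) (log_pos (by nlinarith))
    refine ae_of_all _ fun s => ?_
    rw [norm_div, Real.norm_of_nonneg hD.le, div_le_iff₀' hD]
    exact norm_mul_logWeight_le hb hT (hM T hT).1 (hM T hT).2 s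
  · refine ae_of_all _ fun s => ?_
    simpa [mul_div_assoc] using
      (tendsto_logWeight_div (tendsto_add_rpow_mul_div_self hμ s)).const_mul (h s)

end Domination

lemma abs_le_mul_exp_of_le_mul_exp_mul_rpow {h : ℝ → ℝ} {C c N : ℝ} (hN : 0 ≤ N)
    (hnonneg : ∀ t, 0 ≤ h t) (hdecay : ∀ t, h t ≤ C * exp (-c * |t|) * (|t| + 1) ^ (-N))
    (t : ℝ) : |h t| ≤ C * exp (-(c * |t|)) := by
  have hr_pos : 0 < (|t| + 1) ^ (-N) := rpow_pos_of_pos (by positivity) _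
  have hr_le : (|t| + 1) ^ (-N) ≤ 1 :=
    rpow_le_one_of_one_le_of_nonpos (by linarith [abs_nonneg t]) (by linarith)
  have hCe : 0 ≤ C * exp (-c * |t|) :=
    (mul_nonneg_iff_of_pos_right hr_pos).1 ((hnonneg t).trans (hdecay t))
  rw [abs_of_nonneg (hnonneg t), ← neg_mul]
  exact (hdecay t).trans (mul_le_of_le_one_right hCe hr_le)

theorem hTM_log_eigenvalue_asymptotic_general
    (N : ℝ) (hN : 6 < N) (h : ℝ → ℝ)
    (heven : ∀ t : ℝ, h (-t) = h t)
    (hnonneg : ∀ t : ℝ, 0 ≤ h t)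
    (hne : h ≠ 0)
    (hcont : Continuous h)
    (hdecay : ∃ C : ℝ, ∀ t : ℝ, h t ≤ C * Real.exp (-Real.pi * |t|) * (|t| + 1) ^ (-N))
    (μ : ℝ) (hμ1 : μ < 1) :
    Tendsto (fun T : ℝ =>
        (∫ t : ℝ, (h ((t - T) / T ^ μ) + h ((t + T) / T ^ μ)) * Real.log (1 / 4 + t ^ 2) * t ^ 2) /
          (2 * T ^ μ * T ^ 2 * Real.log (T ^ 2) * ∫ t : ℝ, h t))
      atTop (nhds 1) := by
  obtain ⟨C, hC⟩ := hdecay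
  have hb := abs_le_mul_exp_of_le_mul_exp_mul_rpow (by linarith) hnonneg hC
  have hm : AEStronglyMeasurable h := hcont.aestronglyMeasurable
  obtain ⟨t₀, ht₀⟩ := Function.ne_iff.1 hne
  have hI : 0 < ∫ t, h t := integral_pos_of_integrable_nonneg_nonzero hcont
    (((integrable_exp_neg_mul_abs pi_pos).const_mul C).mono' hm (ae_of_all _ hb)) hnonneg ht₀
  have hlim := (tendsto_integral_mul_logWeight_div pi_gt_three hm hb hμ1).div_const (∫ t, h t)
  rw [div_self hI.ne'] at hlim
  refine hlim.congr' ?_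
  filter_upwards [eventually_ge_atTop 3] with T hT
  have hM : 0 < T ^ μ := rpow_pos_of_pos (by linarith) μ
  have hint := integrable_mul_logWeight pi_gt_three hm hb hT hM.le
    (rpow_le_self_of_one_le (by linarith) hμ1.le)
  have hnum : ∫ t, (h ((t - T) / T ^ μ) + h ((t + T) / T ^ μ)) * log (1 / 4 + t ^ 2) * t ^ 2
      = 2 * T ^ μ * ∫ s, h s * logWeight (T + T ^ μ * s) := by
    simp only [mul_assoc _ (log _)]
    exact integral_even_add_translates_mul heven logWeight_neg hM T hint
  rw [hnum, integral_div]
  field_simp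

/-- for `h ∈ 𝓗⁺(S,N)` (even, nonnegative, not identically zero,
`|h(t)| ≪ e^{-π|t|}(|t|+1)^{-N}` with `N > 6`) and `M = T^μ`, `0 < μ < 1`,
with `h_{T,M}(t) = h((t-T)/M) + h((t+T)/M)` one has
`∫ h_{T,M}(t) log(1/4+t²) t² dt ∼ 2MT² log(T²) ∫ h(t) dt` as `T → ∞`. -/
theorem hTM_log_eigenvalue_asymptotic
    (N : ℝ) (hN : 6 < N) (h : ℝ → ℝ)
    (heven : ∀ t : ℝ, h (-t) = h t)
    (hnonneg : ∀ t : ℝ, 0 ≤ h t)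
    (hne : h ≠ 0)
    (hcont : Continuous h)
    (hdecay : ∃ C : ℝ, ∀ t : ℝ, h t ≤ C * Real.exp (-Real.pi * |t|) * (|t| + 1) ^ (-N))
    (μ : ℝ) (hμ : 0 < μ) (hμ1 : μ < 1) :
    Tendsto (fun T : ℝ =>
        (∫ t : ℝ, (h ((t - T) / T ^ μ) + h ((t + T) / T ^ μ)) * Real.log (1 / 4 + t ^ 2) * t ^ 2) /
          (2 * T ^ μ * T ^ 2 * Real.log (T ^ 2) * ∫ t : ℝ, h t))
      atTop (nhds 1) :=
  hTM_log_eigenvalue_asymptotic_general N hN h heven hnonneg hne hcont hdecay μ hμ1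
end

section
/- For the Euler-product Dirichlet series χ(s) = Σ_{c=1}^∞ μ(c)² / (c^s φ(c)), where μ is the Möbius function and φ Euler's totient, χ(s) converges for Re(s) > 0 and has the Laurent expansion χ(s) = 1/s + O(1) as s → 0⁺ along the real axis; equivalently, lim_{s→0⁺} (χ(s) − 1/s) exists and is finite. -/
open Real Filter ArithmeticFunction

/-!
Put `F = chiCoeff`, `F n = μ(n)² n / φ(n)`, so that `χ(s) = L(F, 1 + s)`, and
`H = chiCorrection = F * μ`, so that `F = H * ζ` and
`χ(s) = L(H, 1 + s) ζ(1 + s)`. The multiplicative function `H` has Euler factors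
`1 + X / (p - 1) - p X² / (p - 1)`, hence `L(H, w)` converges absolutely for `Re w > 1/2`, and at
`w = 1` every Euler factor equals `1 + 1 / (p (p - 1)) - 1 / (p (p - 1)) = 1`. So `L(H, ·)` is
holomorphic at `1` with value `1`, and `χ(s) - 1/s = L(H, 1 + s) (ζ(1 + s) - 1/s) + (L(H, 1 + s) - 1)/s`
tends to `γ + L(H, ·)'(1)`.
-/

theorem summable_of_tsum_prime_pow_le_one_add {g : ℕ → ℝ} (hg : 0 ≤ g) (hg₀ : g 0 = 0)
    (hg₁ : g 1 = 1) (hmul : ∀ {m n : ℕ}, m.Coprime n → g (m * n) = g m * g n)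
    (hsum : ∀ {p : ℕ}, p.Prime → Summable fun k ↦ g (p ^ k)) {c : ℕ → ℝ} (hc : 0 ≤ c)
    (hcs : Summable c) (hgc : ∀ {p : ℕ}, p.Prime → ∑' k, g (p ^ k) ≤ 1 + c p) :
    Summable g := by
  refine summable_of_sum_le (c := exp (∑' n, c n)) hg fun u ↦ ?_
  set N := u.sup id + 1
  obtain ⟨hsmooth, hprod⟩ := EulerProduct.summable_and_hasSum_smoothNumbers_prod_primesBelow_tsum
    hg₁ hmul (fun hp ↦ by simpa [abs_of_nonneg (hg _)] using hsum hp) N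
  -- every nonzero `n ∈ u` is `N`-smooth, so partial sums are bounded by a finite Euler product
  have hu : ∀ n ∈ u, g n = N.smoothNumbers.indicator g n := fun n hn ↦ by
    rcases Nat.eq_zero_or_pos n with rfl | hn0
    · simp [Set.indicator_apply, hg₀]
    · exact (Set.indicator_of_mem (Nat.mem_smoothNumbers_of_lt hn0
        (Nat.lt_succ_of_le (Finset.le_sup (f := id) hn))) g).symm
  have hsmooth' : Summable (N.smoothNumbers.indicator g) :=
    summable_subtype_iff_indicator.mp
      (by simpa [Function.comp_def, abs_of_nonneg (hg _)] using hsmooth)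
  calc ∑ n ∈ u, g n = ∑ n ∈ u, N.smoothNumbers.indicator g n := Finset.sum_congr rfl hu
    _ ≤ ∑' n, N.smoothNumbers.indicator g n :=
      hsmooth'.sum_le_tsum u fun n _ ↦ Set.indicator_nonneg (fun n _ ↦ hg n) n
    _ = ∏ p ∈ N.primesBelow, ∑' k, g (p ^ k) := by rw [← tsum_subtype, hprod.tsum_eq]
    _ ≤ ∏ p ∈ N.primesBelow, exp (c p) :=
      Finset.prod_le_prod (fun p _ ↦ tsum_nonneg fun k ↦ hg _) fun p hp ↦
        (hgc (Nat.prime_of_mem_primesBelow hp)).trans (by linarith [add_one_le_exp (c p)])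
    _ = exp (∑ p ∈ N.primesBelow, c p) := (exp_sum _ _).symm
    _ ≤ exp (∑' n, c n) := exp_le_exp.mpr (hcs.sum_le_tsum _ fun n _ ↦ hc n)

theorem tendsto_mul_sub_one_div_sub {𝕜 : Type*} [NontriviallyNormedField 𝕜] {g z : 𝕜 → 𝕜}
    {a g' γ : 𝕜} (hg : HasDerivAt g g' a) (hga : g a = 1)
    (hz : Tendsto (fun w ↦ z w - 1 / (w - a)) (nhdsWithin a {a}ᶜ) (nhds γ)) :
    Tendsto (fun w ↦ g w * z w - 1 / (w - a)) (nhdsWithin a {a}ᶜ) (nhds (γ + g')) := by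
  have hg_lim : Tendsto g (nhdsWithin a {a}ᶜ) (nhds 1) :=
    hga ▸ hg.continuousAt.tendsto.mono_left nhdsWithin_le_nhds
  rw [← one_mul γ]
  refine ((hg_lim.mul hz).add (hasDerivAt_iff_tendsto_slope.mp hg)).congr' ?_
  filter_upwards [self_mem_nhdsWithin] with w hw
  have hw : w - a ≠ 0 := sub_ne_zero.mpr hw
  rw [slope_def_field, hga]
  field_simp
  ring

theorem Complex.norm_natCast_sub_one {p : ℕ} (hp : 1 ≤ p) : ‖(p : ℂ) - 1‖ = p - 1 := by
  rw [← Nat.cast_one, ← Nat.cast_sub hp, Complex.norm_natCast, Nat.cast_sub hp, Nat.cast_one]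

section
open scoped LSeries.notation

theorem ArithmeticFunction.IsMultiplicative.term_one {f : ArithmeticFunction ℂ}
    (hf : f.IsMultiplicative) (s : ℂ) : LSeries.term ↗f s 1 = 1 := by
  simp [hf.map_one]

theorem ArithmeticFunction.IsMultiplicative.term_mul {f : ArithmeticFunction ℂ}
    (hf : f.IsMultiplicative) (s : ℂ) {m n : ℕ} (h : m.Coprime n) :
    LSeries.term ↗f s (m * n) = LSeries.term ↗f s m * LSeries.term ↗f s n := by
  rcases eq_or_ne m 0 with rfl | hm
  · simp
  rcases eq_or_ne n 0 with rfl | hn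
  · simp
  simp only [LSeries.term_of_ne_zero (mul_ne_zero hm hn), LSeries.term_of_ne_zero hm,
    LSeries.term_of_ne_zero hn, hf.map_mul_of_coprime h, Nat.cast_mul,
    Complex.natCast_mul_natCast_cpow, mul_div_mul_comm]

theorem ArithmeticFunction.LSeriesSummable_zeta {s : ℂ} (hs : 1 < s.re) :
    LSeriesSummable ↗(zeta : ArithmeticFunction ℂ) s := by
  simpa using LSeriesSummable_zeta_iff.mpr hs

noncomputable def chiCoeff : ArithmeticFunction ℂ :=
  ⟨fun n ↦ (moebius n : ℂ) ^ 2 * n / n.totient, by simp⟩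

noncomputable def chiCorrection : ArithmeticFunction ℂ := chiCoeff * moebius

theorem chiCoeff_apply (n : ℕ) : chiCoeff n = (moebius n : ℂ) ^ 2 * n / n.totient := rfl

theorem chiCorrection_mul_zeta : chiCorrection * zeta = chiCoeff := by
  rw [chiCorrection, mul_assoc, coe_moebius_mul_coe_zeta, mul_one]

theorem isMultiplicative_chiCoeff : chiCoeff.IsMultiplicative := by
  refine ⟨by simp [chiCoeff_apply], fun {m n} h ↦ ?_⟩
  simp only [chiCoeff_apply, isMultiplicative_moebius.map_mul_of_coprime h, Nat.totient_mul h]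
  push_cast
  ring

theorem isMultiplicative_chiCorrection : chiCorrection.IsMultiplicative :=
  isMultiplicative_chiCoeff.mul isMultiplicative_moebius.intCast

theorem chiCoeff_apply_prime {p : ℕ} (hp : p.Prime) : chiCoeff p = p / (p - 1) := by
  rw [chiCoeff_apply, moebius_apply_prime hp, Nat.totient_prime hp, Nat.cast_sub hp.one_le]
  simp

theorem chiCoeff_apply_prime_pow {p k : ℕ} (hp : p.Prime) (hk : 2 ≤ k) :
    chiCoeff (p ^ k) = 0 := by
  rw [chiCoeff_apply, moebius_apply_prime_pow hp (by omega), if_neg (by omega)]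
  simp

theorem chiCorrection_apply_prime_pow {p : ℕ} (hp : p.Prime) (k : ℕ) :
    chiCorrection (p ^ k) =
      ∑ i ∈ Finset.range (k + 1), chiCoeff (p ^ i) * (moebius (p ^ (k - i)) : ℂ) := by
  simp only [chiCorrection, mul_apply, intCoe_apply]
  rw [Nat.sum_divisorsAntidiagonal (f := fun a b ↦ chiCoeff a * (moebius b : ℂ)),
    Nat.sum_divisors_prime_pow hp]
  refine Finset.sum_congr rfl fun i hi ↦ ?_
  rw [Nat.pow_div (by simpa [Nat.lt_succ_iff] using hi) hp.pos]

theorem chiCorrection_apply_prime {p : ℕ} (hp : p.Prime) : chiCorrection p = 1 / (p - 1) := by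
  have hp1 : (p : ℂ) - 1 ≠ 0 := sub_ne_zero.mpr (Nat.cast_ne_one.mpr hp.ne_one)
  simpa [Finset.sum_range_succ, isMultiplicative_chiCoeff.map_one, chiCoeff_apply_prime hp,
    moebius_apply_prime hp, field] using chiCorrection_apply_prime_pow hp 1

theorem chiCorrection_apply_prime_sq {p : ℕ} (hp : p.Prime) :
    chiCorrection (p ^ 2) = -p / (p - 1) := by
  have hp1 : (p : ℂ) - 1 ≠ 0 := sub_ne_zero.mpr (Nat.cast_ne_one.mpr hp.ne_one)
  rw [chiCorrection_apply_prime_pow hp]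
  simp [Finset.sum_range_succ, isMultiplicative_chiCoeff.map_one, chiCoeff_apply_prime hp,
    chiCoeff_apply_prime_pow hp le_rfl, moebius_apply_prime hp,
    moebius_apply_prime_pow hp two_ne_zero]
  field_simp

theorem chiCorrection_apply_prime_pow_of_three_le {p k : ℕ} (hp : p.Prime) (hk : 3 ≤ k) :
    chiCorrection (p ^ k) = 0 := by
  rw [chiCorrection_apply_prime_pow hp]
  refine Finset.sum_eq_zero fun i hi ↦ ?_
  have hik : i ≤ k := Nat.lt_succ_iff.mp (Finset.mem_range.mp hi)
  rcases le_or_gt 2 i with hi2 | hi2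
  · rw [chiCoeff_apply_prime_pow hp hi2, zero_mul]
  · rw [moebius_apply_prime_pow hp (by omega), if_neg (by omega), Int.cast_zero, mul_zero]

theorem term_chiCorrection_prime_pow_of_not_mem_range {p k : ℕ} (hp : p.Prime)
    (hk : k ∉ Finset.range 3) (s : ℂ) : LSeries.term ↗chiCorrection s (p ^ k) = 0 := by
  simp [LSeries.term, chiCorrection_apply_prime_pow_of_three_le hp (by simpa using hk)]

theorem norm_term_chiCorrection_prime_le {p : ℕ} (hp : p.Prime) :
    ‖LSeries.term ↗chiCorrection (3 / 4 : ℝ) p‖ ≤ 2 / (p : ℝ) ^ (3 / 2 : ℝ) := by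
  have h2 : (2 : ℝ) ≤ p := mod_cast hp.two_le
  have hpow : (p : ℝ) ^ (3 / 2 : ℝ) = (p : ℝ) ^ (3 / 4 : ℝ) * (p : ℝ) ^ (3 / 4 : ℝ) := by
    rw [← Real.rpow_add (by positivity)]
    norm_num
  have hle : (p : ℝ) ^ (3 / 4 : ℝ) ≤ p := Real.rpow_le_self_of_one_le (by linarith) (by norm_num)
  have hpos : 0 < (p : ℝ) ^ (3 / 4 : ℝ) := by positivity
  rw [LSeries.norm_term_eq, if_neg hp.ne_zero, chiCorrection_apply_prime hp, norm_div, norm_one,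
    Complex.norm_natCast_sub_one hp.one_le, Complex.ofReal_re, hpow, div_div,
    div_le_div_iff₀ (by nlinarith) (by positivity)]
  nlinarith

theorem norm_term_chiCorrection_prime_sq_le {p : ℕ} (hp : p.Prime) :
    ‖LSeries.term ↗chiCorrection (3 / 4 : ℝ) (p ^ 2)‖ ≤ 2 / (p : ℝ) ^ (3 / 2 : ℝ) := by
  have h2 : (2 : ℝ) ≤ p := mod_cast hp.two_le
  have hpow : ((p ^ 2 : ℕ) : ℝ) ^ (3 / 4 : ℝ) = (p : ℝ) ^ (3 / 2 : ℝ) := by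
    rw [Nat.cast_pow, ← Real.rpow_natCast, ← Real.rpow_mul (by positivity)]
    norm_num
  rw [LSeries.norm_term_eq, if_neg (pow_ne_zero 2 hp.ne_zero), chiCorrection_apply_prime_sq hp,
    norm_div, norm_neg, Complex.norm_natCast, Complex.norm_natCast_sub_one hp.one_le,
    Complex.ofReal_re, hpow]
  gcongr
  rw [div_le_iff₀ (by linarith)]
  linarith

theorem summable_norm_term_chiCorrection :
    Summable fun n ↦ ‖LSeries.term ↗chiCorrection (3 / 4 : ℝ) n‖ := by
  have hfin {p : ℕ} (hp : p.Prime) (k : ℕ) (hk : k ∉ Finset.range 3) :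
      ‖LSeries.term ↗chiCorrection (3 / 4 : ℝ) (p ^ k)‖ = 0 := by
    rw [term_chiCorrection_prime_pow_of_not_mem_range hp hk, norm_zero]
  have hc : Summable fun n : ℕ ↦ 4 / (n : ℝ) ^ (3 / 2 : ℝ) :=
    ((Real.summable_one_div_nat_rpow (p := 3 / 2)).mpr (by norm_num)).mul_left 4 |>.congr
      fun n ↦ by ring
  refine summable_of_tsum_prime_pow_le_one_add (fun n ↦ norm_nonneg _) (by simp)
    (by rw [isMultiplicative_chiCorrection.term_one, norm_one])
    (fun h ↦ by rw [isMultiplicative_chiCorrection.term_mul _ h, norm_mul])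
    (fun hp ↦ summable_of_ne_finset_zero (hfin hp)) (fun n ↦ by positivity) hc fun {p} hp ↦ ?_
  rw [tsum_eq_sum (hfin hp), Finset.sum_range_succ, Finset.sum_range_succ, Finset.sum_range_one,
    pow_zero, pow_one, isMultiplicative_chiCorrection.term_one, norm_one]
  have h4 : 4 / (p : ℝ) ^ (3 / 2 : ℝ) = 2 / (p : ℝ) ^ (3 / 2 : ℝ) + 2 / (p : ℝ) ^ (3 / 2 : ℝ) := by
    ring
  linarith [norm_term_chiCorrection_prime_le hp, norm_term_chiCorrection_prime_sq_le hp]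

theorem LSeriesSummable_chiCorrection {s : ℂ} (hs : 3 / 4 ≤ s.re) :
    LSeriesSummable ↗chiCorrection s :=
  LSeriesSummable.of_re_le_re (by simpa using hs)
    (Summable.of_norm summable_norm_term_chiCorrection)

theorem abscissaOfAbsConv_chiCorrection_lt_one :
    LSeries.abscissaOfAbsConv ↗chiCorrection < (1 : ℂ).re :=
  ((LSeriesSummable_chiCorrection (s := (3 / 4 : ℝ)) (by simp)).abscissaOfAbsConv_le).trans_lt
    (by norm_num [← EReal.coe_one])

theorem tsum_term_chiCorrection_one_prime_pow {p : ℕ} (hp : p.Prime) :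
    ∑' k, LSeries.term ↗chiCorrection 1 (p ^ k) = 1 := by
  have hp1 : (p : ℂ) - 1 ≠ 0 := sub_ne_zero.mpr (Nat.cast_ne_one.mpr hp.ne_one)
  rw [tsum_eq_sum fun k hk ↦ term_chiCorrection_prime_pow_of_not_mem_range hp hk 1]
  simp [Finset.sum_range_succ, LSeries.term, hp.ne_zero, isMultiplicative_chiCorrection.map_one,
    chiCorrection_apply_prime hp, chiCorrection_apply_prime_sq hp]
  field_simp
  ring

theorem LSeries_chiCorrection_one : LSeries ↗chiCorrection 1 = 1 := by
  have hsum : Summable fun n ↦ ‖LSeries.term ↗chiCorrection 1 n‖ :=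
    (LSeriesSummable_chiCorrection (by norm_num)).norm
  rw [LSeries, ← EulerProduct.eulerProduct_tprod (isMultiplicative_chiCorrection.term_one 1)
    (isMultiplicative_chiCorrection.term_mul 1) hsum (LSeries.term_zero _ _)]
  exact (tprod_congr fun p ↦ tsum_term_chiCorrection_one_prime_pow p.prop).trans tprod_one

theorem LSeriesSummable_chiCoeff {s : ℂ} (hs : 1 < s.re) : LSeriesSummable ↗chiCoeff s :=
  chiCorrection_mul_zeta ▸ LSeriesSummable_mul (LSeriesSummable_chiCorrection (by linarith))
    (LSeriesSummable_zeta hs)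

theorem LSeries_chiCoeff {s : ℂ} (hs : 1 < s.re) :
    LSeries ↗chiCoeff s = LSeries ↗chiCorrection s * riemannZeta s := by
  rw [← chiCorrection_mul_zeta, LSeries_mul' (LSeriesSummable_chiCorrection (by linarith))
    (LSeriesSummable_zeta hs), ← LSeries_zeta_eq_riemannZeta hs]
  simp

noncomputable def chiTerm (s : ℝ) (n : ℕ) : ℝ :=
  (moebius n : ℝ) ^ 2 / ((n : ℝ) ^ s * (n.totient : ℝ))

theorem ofReal_chiTerm (s : ℝ) (n : ℕ) :
    (chiTerm s n : ℂ) = LSeries.term ↗chiCoeff (1 + s) n := by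
  rcases eq_or_ne n 0 with rfl | hn
  · simp [chiTerm]
  have hn' : (n : ℂ) ≠ 0 := Nat.cast_ne_zero.mpr hn
  rw [LSeries.term_of_ne_zero hn, chiCoeff_apply, Complex.cpow_add _ _ hn', Complex.cpow_one,
    chiTerm, Complex.ofReal_div, Complex.ofReal_mul, Complex.ofReal_cpow (Nat.cast_nonneg n)]
  push_cast
  field_simp

theorem summable_chiTerm {s : ℝ} (hs : 0 < s) : Summable (chiTerm s) :=
  Complex.summable_ofReal.mp <| (LSeriesSummable_chiCoeff (s := 1 + s) (by simpa using hs)).congr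
    fun n ↦ (ofReal_chiTerm s n).symm

theorem ofReal_tsum_chiTerm {s : ℝ} (hs : 0 < s) :
    ((∑' c : ℕ+, chiTerm s c : ℝ) : ℂ) =
      LSeries ↗chiCorrection (1 + s) * riemannZeta (1 + s) := by
  rw [tsum_pnat_eq_tsum_of_eq_zero (by simp [chiTerm]), Complex.ofReal_tsum]
  simp only [ofReal_chiTerm]
  exact LSeries_chiCoeff (by simpa using hs)

end

theorem tendsto_one_add_ofReal_nhdsGT_zero :
    Tendsto (fun s : ℝ ↦ 1 + (s : ℂ)) (nhdsWithin 0 (Set.Ioi 0)) (nhdsWithin 1 {1}ᶜ) := by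
  refine tendsto_nhdsWithin_iff.mpr ⟨((continuous_const.add Complex.continuous_ofReal).tendsto'
    0 1 (by simp)).mono_left nhdsWithin_le_nhds, ?_⟩
  filter_upwards [self_mem_nhdsWithin] with s hs
  simpa using hs.ne'

/-- the Dirichlet series `χ(s) = Σ_{c≥1} μ(c)²/(c^s φ(c))` converges for
`s > 0` and has the Laurent expansion `χ(s) = 1/s + O(1)` as `s → 0⁺`; i.e.
`lim_{s→0⁺} (χ(s) - 1/s)` exists and is finite. -/
theorem chi_series_laurent :
    (∀ s : ℝ, 0 < s →
      Summable fun c : ℕ+ =>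
        ((moebius (c : ℕ) : ℝ)) ^ 2 / ((c : ℝ) ^ s * (Nat.totient (c : ℕ) : ℝ))) ∧
    ∃ L : ℝ, Tendsto (fun s : ℝ =>
        (∑' c : ℕ+, ((moebius (c : ℕ) : ℝ)) ^ 2 / ((c : ℝ) ^ s * (Nat.totient (c : ℕ) : ℝ)))
          - 1 / s)
      (nhdsWithin 0 (Set.Ioi 0)) (nhds L) := by
  refine ⟨fun s hs ↦ (summable_chiTerm hs).comp_injective PNat.coe_injective, ?_⟩
  have hlim := (tendsto_mul_sub_one_div_sub
    (LSeries_hasDerivAt abscissaOfAbsConv_chiCorrection_lt_one) LSeries_chiCorrection_one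
    tendsto_riemannZeta_sub_one_div).comp tendsto_one_add_ofReal_nhdsGT_zero
  refine ⟨_, ((Complex.continuous_re.tendsto _).comp hlim).congr' ?_⟩
  filter_upwards [self_mem_nhdsWithin] with s hs
  simp only [Function.comp_apply, ← ofReal_tsum_chiTerm hs, add_sub_cancel_left]
  rw [← Complex.ofReal_one, ← Complex.ofReal_div, ← Complex.ofReal_sub, Complex.ofReal_re]
  rfl
end

section
/- For ν, μ ∈ ℂ with Re(μ) > |Re(ν)|, the Mellin transform of the K-Bessel function satisfies ∫₀^∞ K_ν(x) x^{μ−1} dx = 2^{μ−2} Γ((μ−ν)/2) Γ((μ+ν)/2). -/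
/-!
Insert `K_ν` into the Mellin integral and swap the two integrations. The inner integral
`∫₀^∞ e^{-x cosh t} x^{μ-1} dx` is `Γ(μ) (cosh t)^{-μ}`, so the left side becomes
`Γ(μ)/2 · ∫ e^{-νt} (cosh t)^{-μ} dt`. The substitution `x = σ(2t) = e^t / (2 cosh t)`, with
`σ` the logistic sigmoid and `1 - σ(2t) = e^{-t} / (2 cosh t)`, identifies this last integral
with `2^{μ-1} B((μ-ν)/2, (μ+ν)/2)`, and `Γ(u) Γ(v) = Γ(u+v) B(u, v)` finishes. The swap is
justified by Tonelli: the same computation on absolute values reduces absolute convergence of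
the double integral to the convergence of the Beta integral.
-/

open Real Complex MeasureTheory

noncomputable def besselK (ν : ℂ) (x : ℝ) : ℂ :=
  (1 / 2) * ∫ t : ℝ, Complex.exp (-(x : ℂ) * Real.cosh t) * Complex.exp (-ν * t)

open Set

namespace Real

lemma sigmoid_two_mul (t : ℝ) : sigmoid (2 * t) = exp t / (2 * cosh t) := by
  have h : exp t * exp (-t) = 1 := by rw [← exp_add, add_neg_cancel, exp_zero]
  rw [sigmoid_def, cosh_eq, mul_div_cancel₀ _ two_ne_zero, eq_div_iff (by positivity),
    show 2 * t = t + t by ring, neg_add, exp_add]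
  field_simp
  linear_combination (-exp (-t)) * h

lemma one_sub_sigmoid_two_mul (t : ℝ) : 1 - sigmoid (2 * t) = exp (-t) / (2 * cosh t) := by
  rw [← sigmoid_neg, ← mul_neg, sigmoid_two_mul, cosh_neg]

lemma log_sigmoid_two_mul (t : ℝ) : log (sigmoid (2 * t)) = t - log (2 * cosh t) := by
  rw [sigmoid_two_mul, log_div (exp_pos t).ne' (by positivity), log_exp]

lemma log_one_sub_sigmoid_two_mul (t : ℝ) :
    log (1 - sigmoid (2 * t)) = -t - log (2 * cosh t) := by
  rw [one_sub_sigmoid_two_mul, log_div (exp_pos _).ne' (by positivity), log_exp]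

lemma sigmoid_mul_one_sub_sigmoid_pos (x : ℝ) : 0 < sigmoid x * (1 - sigmoid x) :=
  mul_pos (sigmoid_pos x) (sub_pos.2 (sigmoid_lt_one x))

lemma hasDerivAt_sigmoid_two_mul (t : ℝ) :
    HasDerivAt (fun t => sigmoid (2 * t)) (2 * (sigmoid (2 * t) * (1 - sigmoid (2 * t)))) t := by
  have := (hasDerivAt_sigmoid (2 * t)).comp t ((hasDerivAt_id' t).const_mul (2 : ℝ))
  rwa [mul_one, mul_comm] at this

lemma injective_sigmoid_two_mul : Function.Injective fun t => sigmoid (2 * t) :=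
  sigmoid_injective.comp (mul_right_injective₀ two_ne_zero)

lemma image_univ_sigmoid_two_mul : (fun t => sigmoid (2 * t)) '' univ = Ioo 0 1 := by
  rw [image_univ, ← range_sigmoid]
  exact (mul_left_surjective₀ two_ne_zero).range_comp sigmoid

section Substitution

variable {E : Type*} [NormedAddCommGroup E] [NormedSpace ℝ E]

lemma integrableOn_Ioo_zero_one_iff_integrable_sigmoid_two_mul (g : ℝ → E) :
    IntegrableOn g (Ioo 0 1) ↔ Integrable fun t =>
      (2 * (sigmoid (2 * t) * (1 - sigmoid (2 * t)))) • g (sigmoid (2 * t)) := by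
  rw [← image_univ_sigmoid_two_mul, integrableOn_image_iff_integrableOn_abs_deriv_smul
    MeasurableSet.univ (fun t _ => (hasDerivAt_sigmoid_two_mul t).hasDerivWithinAt)
    injective_sigmoid_two_mul.injOn, integrableOn_univ]
  simp_rw [abs_of_pos (mul_pos two_pos (sigmoid_mul_one_sub_sigmoid_pos _))]

lemma integral_Ioo_zero_one_eq_integral_sigmoid_two_mul (g : ℝ → E) :
    ∫ x in Ioo 0 1, g x
      = ∫ t, (2 * (sigmoid (2 * t) * (1 - sigmoid (2 * t)))) • g (sigmoid (2 * t)) := by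
  rw [← image_univ_sigmoid_two_mul, integral_image_eq_integral_abs_deriv_smul
    MeasurableSet.univ (fun t _ => (hasDerivAt_sigmoid_two_mul t).hasDerivWithinAt)
    injective_sigmoid_two_mul.injOn, Measure.restrict_univ]
  simp_rw [abs_of_pos (mul_pos two_pos (sigmoid_mul_one_sub_sigmoid_pos _))]

end Substitution

end Real

lemma Complex.ofReal_cpow_eq_exp_log {x : ℝ} (hx : 0 < x) (s : ℂ) :
    (x : ℂ) ^ s = cexp (Real.log x * s) := by
  rw [cpow_def_of_ne_zero (ofReal_ne_zero.2 hx.ne'), ofReal_log hx.le]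

lemma Complex.betaIntegral_eq_integral_Ioo (u v : ℂ) :
    betaIntegral u v
      = ∫ x in Ioo (0 : ℝ) 1, (x : ℂ) ^ (u - 1) * (1 - (x : ℂ)) ^ (v - 1) := by
  rw [betaIntegral, intervalIntegral.integral_of_le zero_le_one, integral_Ioc_eq_integral_Ioo]

lemma smul_betaIntegrand_sigmoid_two_mul (ν μ : ℂ) (t : ℝ) :
    (2 * (sigmoid (2 * t) * (1 - sigmoid (2 * t)))) •
        ((sigmoid (2 * t) : ℂ) ^ ((μ - ν) / 2 - 1) *
          (1 - (sigmoid (2 * t) : ℂ)) ^ ((μ + ν) / 2 - 1))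
      = 2 ^ (1 - μ) * (cexp (-ν * t) * (Real.cosh t : ℂ) ^ (-μ)) := by
  have hσ := sigmoid_pos (2 * t)
  have h1σ : 0 < 1 - sigmoid (2 * t) := sub_pos.2 (sigmoid_lt_one _)
  -- every factor becomes the exponential of a combination of `t`, `log 2` and `log (cosh t)`
  rw [real_smul, ← ofReal_one, ← ofReal_sub, ← Real.exp_log
    (by positivity : 0 < 2 * (sigmoid (2 * t) * (1 - sigmoid (2 * t)))), ofReal_exp,
    ofReal_cpow_eq_exp_log hσ, ofReal_cpow_eq_exp_log h1σ, ofReal_cpow_eq_exp_log (cosh_pos t),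
    ← ofReal_ofNat, ofReal_cpow_eq_exp_log two_pos, Real.log_mul two_ne_zero (by positivity),
    Real.log_mul hσ.ne' h1σ.ne', log_sigmoid_two_mul, log_one_sub_sigmoid_two_mul,
    Real.log_mul two_ne_zero (cosh_pos t).ne', ← Complex.exp_add, ← Complex.exp_add,
    ← Complex.exp_add, ← Complex.exp_add]
  congr 1
  push_cast
  ring

lemma integral_exp_mul_cosh_cpow_neg (ν μ : ℂ) :
    ∫ t : ℝ, cexp (-ν * t) * (Real.cosh t : ℂ) ^ (-μ)
      = 2 ^ (μ - 1) * betaIntegral ((μ - ν) / 2) ((μ + ν) / 2) := by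
  rw [betaIntegral_eq_integral_Ioo, integral_Ioo_zero_one_eq_integral_sigmoid_two_mul]
  simp_rw [smul_betaIntegrand_sigmoid_two_mul]
  rw [integral_const_mul, ← mul_assoc, ← cpow_add _ _ two_ne_zero, sub_add_sub_cancel',
    sub_self, cpow_zero, one_mul]

lemma integrable_exp_mul_cosh_cpow_neg {ν μ : ℂ} (h : |ν.re| < μ.re) :
    Integrable fun t : ℝ => cexp (-ν * t) * (Real.cosh t : ℂ) ^ (-μ) := by
  obtain ⟨hνμ, hνμ'⟩ := abs_lt.1 h
  have hbeta : IntegrableOn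
      (fun x : ℝ => (x : ℂ) ^ ((μ - ν) / 2 - 1) * (1 - (x : ℂ)) ^ ((μ + ν) / 2 - 1))
      (Ioo 0 1) :=
    ((intervalIntegrable_iff_integrableOn_Ioc_of_le zero_le_one).1
      (betaIntegral_convergent (by rw [div_ofNat_re, sub_re]; linarith)
        (by rw [div_ofNat_re, add_re]; linarith))).mono_set Ioo_subset_Ioc_self
  rw [integrableOn_Ioo_zero_one_iff_integrable_sigmoid_two_mul] at hbeta
  simp_rw [smul_betaIntegrand_sigmoid_two_mul] at hbeta
  exact (integrable_const_mul_iff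
    (isUnit_iff_ne_zero.2 (cpow_ne_zero_iff.2 (.inl two_ne_zero))) _).1 hbeta

lemma integrableOn_cpow_mul_exp_neg_mul_Ioi {a : ℂ} {r : ℝ} (ha : 0 < a.re) (hr : 0 < r) :
    IntegrableOn (fun t : ℝ => (t : ℂ) ^ (a - 1) * cexp (-(r * t))) (Ioi 0) := by
  have hnorm :
      IntegrableOn (fun t : ℝ => t ^ (a.re - 1) * Real.exp (-r * t ^ (1 : ℝ))) (Ioi 0) :=
    integrableOn_rpow_mul_exp_neg_mul_rpow (by linarith) one_pos hr
  refine (integrable_norm_iff (by fun_prop)).1 (hnorm.congr_fun (fun t (ht : 0 < t) => ?_)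
    measurableSet_Ioi)
  simp [norm_cpow_eq_rpow_re_of_pos ht, norm_exp]

lemma integral_exp_neg_mul_cosh_mul_cpow {μ : ℂ} (hμ : 0 < μ.re) (ν : ℂ) (t : ℝ) :
    ∫ x in Ioi (0 : ℝ), cexp (-x * Real.cosh t) * cexp (-ν * t) * (x : ℂ) ^ (μ - 1)
      = Complex.Gamma μ * (cexp (-ν * t) * (Real.cosh t : ℂ) ^ (-μ)) := by
  have hcosh : (Real.cosh t : ℂ).arg ≠ π := by
    rw [arg_ofReal_of_nonneg (cosh_pos t).le]
    exact pi_ne_zero.symm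
  simp_rw [show ∀ x : ℝ, cexp (-x * Real.cosh t) * cexp (-ν * t) * (x : ℂ) ^ (μ - 1)
      = (x : ℂ) ^ (μ - 1) * cexp (-(Real.cosh t * x)) * cexp (-ν * t) from fun x => by ring_nf]
  rw [integral_mul_const, integral_cpow_mul_exp_neg_mul_Ioi hμ (cosh_pos t), one_div,
    inv_cpow _ _ hcosh, ← cpow_neg]
  ring

lemma integral_norm_exp_neg_mul_cosh_mul_cpow {μ : ℂ} (hμ : 0 < μ.re) (ν : ℂ) (t : ℝ) :
    ∫ x in Ioi (0 : ℝ), ‖cexp (-x * Real.cosh t) * cexp (-ν * t) * (x : ℂ) ^ (μ - 1)‖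
      = Real.Gamma μ.re * ‖cexp (-ν * t) * (Real.cosh t : ℂ) ^ (-μ)‖ := by
  have hnorm : ∀ x ∈ Ioi (0 : ℝ),
      ‖cexp (-x * Real.cosh t) * cexp (-ν * t) * (x : ℂ) ^ (μ - 1)‖
        = x ^ (μ.re - 1) * Real.exp (-(Real.cosh t * x)) * ‖cexp (-ν * t)‖ := fun x hx => by
    rw [norm_mul, norm_mul, norm_cpow_eq_rpow_re_of_pos hx, norm_exp]
    simp only [neg_mul, neg_re, mul_re, ofReal_re, ofReal_im, mul_zero, sub_zero, sub_re, one_re]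
    ring_nf
  rw [setIntegral_congr_fun measurableSet_Ioi hnorm, integral_mul_const,
    Real.integral_rpow_mul_exp_neg_mul_Ioi hμ (cosh_pos t), norm_mul,
    norm_cpow_eq_rpow_re_of_pos (cosh_pos t), neg_re, one_div, Real.inv_rpow (cosh_pos t).le,
    ← Real.rpow_neg (cosh_pos t).le]
  ring

lemma integrable_exp_neg_mul_cosh_mul_cpow {ν μ : ℂ} (h : |ν.re| < μ.re) :
    Integrable (Function.uncurry fun (x t : ℝ) =>
        cexp (-x * Real.cosh t) * cexp (-ν * t) * (x : ℂ) ^ (μ - 1))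
      ((volume.restrict (Ioi 0)).prod volume) := by
  have hμ : 0 < μ.re := (abs_nonneg _).trans_lt h
  refine (integrable_prod_iff' (by fun_prop)).2 ⟨.of_forall fun t => ?_, ?_⟩
  · refine IntegrableOn.congr_fun
      ((integrableOn_cpow_mul_exp_neg_mul_Ioi hμ (cosh_pos t)).mul_const (cexp (-ν * t)))
      (fun x _ => ?_) measurableSet_Ioi
    simp only [Function.uncurry_apply_pair]
    ring_nf
  · simp only [Function.uncurry_apply_pair, integral_norm_exp_neg_mul_cosh_mul_cpow hμ]
    exact (integrable_exp_mul_cosh_cpow_neg h).norm.const_mul _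

/-- for `Re μ > |Re ν|`, the Mellin transform of `K_ν` satisfies
`∫₀^∞ K_ν(x) x^{μ-1} dx = 2^{μ-2} Γ((μ-ν)/2) Γ((μ+ν)/2)`. -/
theorem besselK_mellin (ν μ : ℂ) (h : |ν.re| < μ.re) :
    ∫ x in Set.Ioi (0 : ℝ), besselK ν x * (x : ℂ) ^ (μ - 1)
      = (2 : ℂ) ^ (μ - 2) * Complex.Gamma ((μ - ν) / 2) * Complex.Gamma ((μ + ν) / 2) := by
  have hμ : 0 < μ.re := (abs_nonneg _).trans_lt h
  obtain ⟨hνμ, hνμ'⟩ := abs_lt.1 h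
  calc ∫ x in Ioi (0 : ℝ), besselK ν x * (x : ℂ) ^ (μ - 1)
      = 1 / 2 * ∫ x in Ioi (0 : ℝ), ∫ t : ℝ,
          cexp (-x * Real.cosh t) * cexp (-ν * t) * (x : ℂ) ^ (μ - 1) := by
        simp_rw [besselK, mul_assoc (1 / 2 : ℂ), ← integral_mul_const, integral_const_mul]
    _ = 1 / 2 * ∫ t : ℝ, ∫ x in Ioi (0 : ℝ),
          cexp (-x * Real.cosh t) * cexp (-ν * t) * (x : ℂ) ^ (μ - 1) := by
        rw [integral_integral_swap (integrable_exp_neg_mul_cosh_mul_cpow h)]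
    _ = 1 / 2 * Complex.Gamma μ *
          (2 ^ (μ - 1) * betaIntegral ((μ - ν) / 2) ((μ + ν) / 2)) := by
        simp_rw [integral_exp_neg_mul_cosh_mul_cpow hμ]
        rw [integral_const_mul, integral_exp_mul_cosh_cpow_neg, mul_assoc]
    _ = 2 ^ (μ - 2) * Complex.Gamma ((μ - ν) / 2) * Complex.Gamma ((μ + ν) / 2) := by
        rw [mul_assoc ((2 : ℂ) ^ (μ - 2)), Gamma_mul_Gamma_eq_betaIntegral
          (by rw [div_ofNat_re, sub_re]; linarith) (by rw [div_ofNat_re, add_re]; linarith),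
          show (μ - ν) / 2 + (μ + ν) / 2 = μ by ring, show μ - 1 = 1 + (μ - 2) by ring,
          cpow_add _ _ two_ne_zero, cpow_one]
        ring
end
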